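/- For every non-negative even integer t and every τ in the complex upper half-plane ℍ, one has ℱ_t(q) = −(1/2)·D_ω^t[ Σ_{n∈ℤ} (−1)^n·e^{2πiω}·q^{4n²+8n+3}/(1 − e^{4πiω}·q^{8n+4}) ]|_{ω=0}, where the bilateral series is holomorphic in ω in a neighborhood of ω = 0 and D_ω^t denotes the t-fold application of the operator (1/2πi)·d/dω, evaluated at ω = 0. -/

import Mathlib

noncomputable section
open Complex Real

/-- `q = e^{2πiτ}`. -/
def nome (τ : ℂ) : ℂ := Complex.exp (2 * (π : ℂ) * I * τ)

/-- `ℱ_t(x) = Σ_{β≥0} Σ_{α≥β+1} (−1)^{α+β} (2β+1)^t x^{4α²−(2β+1)²}`, with `α = β+1+j`. -/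
def Fser (t : ℕ) (x : ℂ) : ℂ :=
  ∑' (β : ℕ) (j : ℕ), (-1 : ℂ) ^ (β + 1 + j + β) * (2 * (β : ℂ) + 1) ^ t *
    x ^ (4 * (β + 1 + j) ^ 2 - (2 * β + 1) ^ 2)

/-- The bilateral series `ω ↦ Σ_{n∈ℤ} (−1)ⁿ e^{2πiω} q^{4n²+8n+3} / (1 − e^{4πiω} q^{8n+4})`. -/
def bilat (τ ω : ℂ) : ℂ :=
  ∑' n : ℤ, (-1 : ℂ) ^ n * Complex.exp (2 * (π : ℂ) * I * ω) *
      nome τ ^ (4 * n ^ 2 + 8 * n + 3 : ℤ) /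
    (1 - Complex.exp (4 * (π : ℂ) * I * ω) * nome τ ^ (8 * n + 4 : ℤ))

/-!
Expanding the `n`-th term of the bilateral series geometrically in `e^{4πiω} q^{8n+4}`
gives `Σ_{β ≥ 0} (-1)ⁿ q^{(2n+1)(2n+4β+3)} e^{2πi(2β+1)ω}`, and the term of index `-n-1`
is the term of index `n` evaluated at `-ω`. So near `ω = 0` the series is `E(ω) + E(-ω)`
for the exponential sum `E(ω) = Σ_{β,n ≥ 0} (-1)ⁿ q^{(2n+1)(2n+4β+3)} e^{2πi(2β+1)ω}`.
It converges absolutely on `|ω| < Im τ`, hence may be differentiated termwise on any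
smaller disc, and `D_ω^t (E(ω) + E(-ω))` at `0` is
`(1 + (-1)^t) Σ (-1)ⁿ (2β+1)^t q^{(2n+1)(2n+4β+3)}`.
As `(2n+1)(2n+4β+3) = 4(β+1+n)² - (2β+1)²`, for even `t` this is `-2 ℱ_t(q)`.
-/

open Metric Filter Topology Nat

section ExpSum

variable {ι : Type*} {a c : ι → ℂ} {r R : ℝ}

def expSum (a c : ι → ℂ) (ω : ℂ) : ℂ := ∑' j, a j * Complex.exp (c j * ω)

theorem norm_exp_mul_le {x ω : ℂ} (hω : ‖ω‖ ≤ r) :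
    ‖Complex.exp (x * ω)‖ ≤ Real.exp (‖x‖ * r) := by
  rw [Complex.norm_exp, Real.exp_le_exp]
  calc (x * ω).re ≤ ‖x * ω‖ := Complex.re_le_norm _
    _ ≤ ‖x‖ * r := by rw [norm_mul]; gcongr

/-- Shrinking the radius absorbs any power of the frequencies, since `x ^ t ≤ t! e^x`. -/
theorem summable_norm_mul_pow_mul_exp (hR : Summable fun j => ‖a j‖ * Real.exp (‖c j‖ * R))
    (hrR : r < R) (t : ℕ) : Summable fun j => ‖a j * c j ^ t‖ * Real.exp (‖c j‖ * r) := by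
  have hδ : 0 < R - r := sub_pos.2 hrR
  refine (hR.mul_left (t ! / (R - r) ^ t)).of_nonneg_of_le (fun j => by positivity) fun j => ?_
  have hpow : ‖c j‖ ^ t ≤ t ! / (R - r) ^ t * Real.exp ((R - r) * ‖c j‖) := by
    have := Real.pow_div_factorial_le_exp _ (mul_nonneg hδ.le (norm_nonneg (c j))) t
    rw [mul_pow, div_le_iff₀ (by positivity)] at this
    rw [div_mul_eq_mul_div, le_div_iff₀ (by positivity)]
    linarith
  calc ‖a j * c j ^ t‖ * Real.exp (‖c j‖ * r)
      = ‖a j‖ * ‖c j‖ ^ t * Real.exp (‖c j‖ * r) := by rw [norm_mul, norm_pow]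
    _ ≤ ‖a j‖ * (t ! / (R - r) ^ t * Real.exp ((R - r) * ‖c j‖)) *
          Real.exp (‖c j‖ * r) := by
        gcongr
    _ = t ! / (R - r) ^ t * (‖a j‖ * Real.exp (‖c j‖ * R)) := by
        rw [show ‖c j‖ * R = (R - r) * ‖c j‖ + ‖c j‖ * r by ring, Real.exp_add]; ring

theorem hasDerivAt_expSum (hR : Summable fun j => ‖a j‖ * Real.exp (‖c j‖ * R)) {ω : ℂ}
    (hω : ‖ω‖ < R) : HasDerivAt (expSum a c) (expSum (fun j => a j * c j) c ω) ω := by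
  obtain ⟨r, hωr, hrR⟩ := exists_between hω
  have hr : 0 < r := (norm_nonneg ω).trans_lt hωr
  have hsum0 : Summable fun j => a j * Complex.exp (c j * 0) :=
    (summable_norm_mul_pow_mul_exp hR hrR 0).of_norm_bounded fun j => by
      rw [pow_zero, mul_one, norm_mul]
      gcongr
      exact norm_exp_mul_le (by simpa using hr.le)
  refine hasDerivAt_tsum_of_isPreconnected (g := fun j z => a j * Complex.exp (c j * z))
    (g' := fun j z => a j * c j * Complex.exp (c j * z))
    (summable_norm_mul_pow_mul_exp hR hrR 1) isOpen_ball
    (convex_ball 0 r).isPreconnected (fun j z _ => ?_) (fun j z hz => ?_) (mem_ball_self hr)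
    hsum0 (mem_ball_zero_iff.2 hωr)
  · exact ((((hasDerivAt_id' z).const_mul (c j)).cexp).const_mul (a j)).congr_deriv (by ring)
  · rw [pow_one, norm_mul (a j * c j)]
    gcongr
    exact norm_exp_mul_le (mem_ball_zero_iff.1 hz).le

theorem iteratedDeriv_expSum (hR : Summable fun j => ‖a j‖ * Real.exp (‖c j‖ * R)) (t : ℕ)
    {ω : ℂ} (hω : ‖ω‖ < R) :
    iteratedDeriv t (expSum a c) ω = expSum (fun j => a j * c j ^ t) c ω := by
  induction t generalizing ω with
  | zero => simp
  | succ t ih =>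
    obtain ⟨r, hωr, hrR⟩ := exists_between hω
    have hball : iteratedDeriv t (expSum a c) =ᶠ[𝓝 ω] expSum (fun j => a j * c j ^ t) c :=
      eventually_of_mem (isOpen_lt continuous_norm continuous_const |>.mem_nhds hω)
        fun _ hz => ih hz
    rw [iteratedDeriv_succ, hball.deriv_eq,
      (hasDerivAt_expSum (summable_norm_mul_pow_mul_exp hR hrR t) hωr).deriv]
    simp only [expSum, pow_succ, mul_assoc]

theorem analyticAt_expSum (hR : Summable fun j => ‖a j‖ * Real.exp (‖c j‖ * R)) {ω : ℂ}
    (hω : ‖ω‖ < R) : AnalyticAt ℂ (expSum a c) ω :=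
  DifferentiableOn.analyticAt (s := ball 0 R)
    (fun _ hz => (hasDerivAt_expSum hR (mem_ball_zero_iff.1 hz)).differentiableAt
      |>.differentiableWithinAt)
    (isOpen_ball.mem_nhds (mem_ball_zero_iff.2 hω))

end ExpSum

theorem iteratedDeriv_add_comp_neg_zero {𝕜 F : Type*} [NontriviallyNormedField 𝕜]
    [NormedAddCommGroup F] [NormedSpace 𝕜 F] {g : 𝕜 → F} {t : ℕ}
    (hg : ContDiffAt 𝕜 t g 0) :
    iteratedDeriv t (fun x => g x + g (-x)) 0 = (1 + (-1 : 𝕜) ^ t) • iteratedDeriv t g 0 := by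
  have hneg : ContDiffAt 𝕜 t (fun x => g (-x)) 0 :=
    ContDiffAt.comp (g := g) 0 (by simpa using hg) contDiff_neg.contDiffAt
  rw [iteratedDeriv_fun_add hg hneg, iteratedDeriv_comp_neg, neg_zero, add_smul, one_smul]

def bilatTerm (q : ℂ) (n : ℤ) (ω : ℂ) : ℂ :=
  (-1 : ℂ) ^ n * Complex.exp (2 * π * I * ω) * q ^ (4 * n ^ 2 + 8 * n + 3 : ℤ) /
    (1 - Complex.exp (4 * π * I * ω) * q ^ (8 * n + 4 : ℤ))

theorem bilat_eq_tsum_bilatTerm (τ ω : ℂ) : bilat τ ω = ∑' n, bilatTerm (nome τ) n ω :=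
  rfl

-- The exponential sum `E` is `expSum (bilatCoeff q) bilatFreq`, indexed by pairs `p = (β, n)`
-- in the order of the double sum in `Fser`.
def bilatCoeff (q : ℂ) (p : ℕ × ℕ) : ℂ :=
  (-1) ^ p.2 * q ^ ((2 * p.2 + 1) * (2 * p.2 + 4 * p.1 + 3))

def bilatFreq (p : ℕ × ℕ) : ℂ := 2 * π * I * (2 * p.1 + 1)

theorem norm_nome (τ : ℂ) : ‖nome τ‖ = Real.exp (-(2 * π * τ.im)) := by
  simp [nome, Complex.norm_exp, Complex.mul_re]

theorem norm_bilatFreq (p : ℕ × ℕ) : ‖bilatFreq p‖ = 2 * π * (2 * p.1 + 1) := by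
  have : (2 * (p.1 : ℂ) + 1) = ((2 * p.1 + 1 : ℝ) : ℂ) := by push_cast; ring
  rw [bilatFreq, this, norm_mul, norm_mul, norm_mul, Complex.norm_real, Complex.norm_real,
    Complex.norm_I, Complex.norm_two, Real.norm_of_nonneg pi_pos.le,
    Real.norm_of_nonneg (by positivity)]
  ring

theorem exp_four_pi_I_mul (ω : ℂ) :
    Complex.exp (4 * π * I * ω) = Complex.exp (2 * π * I * ω) ^ 2 := by
  rw [← Complex.exp_nat_mul]
  ring_nf

theorem summable_bilatCoeff {τ : ℂ} (hτ : 0 < τ.im) :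
    Summable fun p => ‖bilatCoeff (nome τ) p‖ * Real.exp (‖bilatFreq p‖ * τ.im) := by
  set ρ := Real.exp (-(2 * π * τ.im))
  have hρ0 : 0 ≤ ρ := (Real.exp_pos _).le
  have hρ1 : ρ < 1 := Real.exp_lt_one_iff.2 (by have := pi_pos; nlinarith)
  have hgeom := summable_geometric_of_lt_one hρ0 hρ1
  refine (hgeom.mul_of_nonneg hgeom (fun _ => by positivity) (fun _ => by positivity))
    |>.of_nonneg_of_le (fun _ => by positivity) fun ⟨β, j⟩ => ?_
  have hE : (2 * j + 1) * (2 * j + 4 * β + 3) =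
      (4 * j ^ 2 + 8 * j * β + 8 * j + 2 * β + 2) + (2 * β + 1) := by
    ring
  have hcancel : ρ ^ (2 * β + 1) * Real.exp (2 * π * (2 * β + 1) * τ.im) = 1 := by
    rw [← Real.exp_nat_mul, ← Real.exp_add]
    push_cast
    ring_nf
    exact Real.exp_zero
  calc ‖bilatCoeff (nome τ) (β, j)‖ * Real.exp (‖bilatFreq (β, j)‖ * τ.im)
      = ρ ^ (4 * j ^ 2 + 8 * j * β + 8 * j + 2 * β + 2) := by
        have hcoeff :
            ‖bilatCoeff (nome τ) (β, j)‖ = ρ ^ ((2 * j + 1) * (2 * j + 4 * β + 3)) := by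
          simp [bilatCoeff, norm_nome, ρ]
        rw [hcoeff, norm_bilatFreq, hE, pow_add, mul_assoc, hcancel, mul_one]
    _ ≤ ρ ^ (β + j) := pow_le_pow_of_le_one hρ0 hρ1.le (by nlinarith)
    _ = ρ ^ β * ρ ^ j := pow_add ..

theorem norm_exp_mul_nome_pow_lt_one {τ ω : ℂ} (hω : ‖ω‖ < 2 * τ.im) (n : ℕ) :
    ‖Complex.exp (4 * π * I * ω) * nome τ ^ (8 * n + 4)‖ < 1 := by
  have hπ := pi_pos
  have hy : 0 < τ.im := by linarith [norm_nonneg ω]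
  have hexp : ‖Complex.exp (4 * π * I * ω)‖ ≤ Real.exp (4 * π * ‖ω‖) := by
    refine (norm_exp_mul_le le_rfl).trans_eq ?_
    simp [abs_of_pos hπ]
  have hq : ‖nome τ ^ (8 * n + 4)‖ ≤ Real.exp (-(2 * π * τ.im)) ^ 4 := by
    rw [norm_pow, norm_nome]
    exact pow_le_pow_of_le_one (Real.exp_pos _).le
      (Real.exp_le_one_iff.2 (by nlinarith)) (by omega)
  calc ‖Complex.exp (4 * π * I * ω) * nome τ ^ (8 * n + 4)‖
      ≤ Real.exp (4 * π * ‖ω‖) * Real.exp (-(2 * π * τ.im)) ^ 4 := by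
        rw [norm_mul]; gcongr
    _ < 1 := by
        rw [← Real.exp_nat_mul, ← Real.exp_add, Real.exp_lt_one_iff]
        push_cast
        nlinarith

theorem bilatTerm_natCast (q : ℂ) (n : ℕ) (ω : ℂ) :
    bilatTerm q n ω = (-1) ^ n * Complex.exp (2 * π * I * ω) * q ^ ((2 * n + 1) * (2 * n + 3)) /
      (1 - Complex.exp (2 * π * I * ω) ^ 2 * q ^ (8 * n + 4)) := by
  rw [bilatTerm, exp_four_pi_I_mul,
    show (4 * (n : ℤ) ^ 2 + 8 * n + 3) = ((2 * n + 1) * (2 * n + 3) : ℕ) by push_cast; ring,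
    show (8 * (n : ℤ) + 4) = (8 * n + 4 : ℕ) by push_cast; ring, zpow_natCast, zpow_natCast,
    zpow_natCast]

theorem bilatTerm_neg_natCast_sub_one {q : ℂ} (hq : q ≠ 0) (n : ℕ) (ω : ℂ) :
    bilatTerm q (-(n + 1)) ω = -((-1) ^ n * Complex.exp (2 * π * I * ω) *
      (q ^ ((2 * n + 1) * (2 * n + 3)) * (q ^ (8 * n + 4))⁻¹)) /
        (1 - Complex.exp (2 * π * I * ω) ^ 2 * (q ^ (8 * n + 4))⁻¹) := by
  rw [bilatTerm, exp_four_pi_I_mul,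
    show 4 * (-((n : ℤ) + 1)) ^ 2 + 8 * (-((n : ℤ) + 1)) + 3 =
      ((2 * n + 1) * (2 * n + 3) : ℕ) - (8 * n + 4 : ℕ) by push_cast; ring,
    show 8 * (-((n : ℤ) + 1)) + 4 = -(8 * n + 4 : ℕ) by push_cast; ring,
    show -((n : ℤ) + 1) = -(n + 1 : ℕ) by push_cast; ring,
    zpow_sub₀ hq, zpow_neg, zpow_neg, zpow_natCast, zpow_natCast, zpow_natCast, ← inv_pow,
    inv_neg, inv_one]
  ring

theorem hasSum_bilatTerm {q ω : ℂ} (n : ℕ)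
    (h : ‖Complex.exp (4 * π * I * ω) * q ^ (8 * n + 4)‖ < 1) :
    HasSum (fun β => bilatCoeff q (β, n) * Complex.exp (bilatFreq (β, n) * ω))
      (bilatTerm q n ω) := by
  set z := Complex.exp (2 * π * I * ω)
  rw [exp_four_pi_I_mul] at h
  have hterm : ∀ β : ℕ, bilatCoeff q (β, n) * Complex.exp (bilatFreq (β, n) * ω) =
      (-1) ^ n * z * q ^ ((2 * n + 1) * (2 * n + 3)) * (z ^ 2 * q ^ (8 * n + 4)) ^ β := by
    intro β
    have hfreq : Complex.exp (bilatFreq (β, n) * ω) = z ^ (2 * β + 1) := by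
      rw [← Complex.exp_nat_mul, bilatFreq]
      push_cast
      ring_nf
    rw [hfreq, bilatCoeff, mul_pow, ← pow_mul, ← pow_mul]
    ring_nf
  rw [funext hterm, bilatTerm_natCast, div_eq_mul_inv]
  exact (hasSum_geometric_of_norm_lt_one h).mul_left _

theorem bilatTerm_neg_sub_one {q : ℂ} (hq : q ≠ 0) (n : ℕ) (ω : ℂ) :
    bilatTerm q (-(n + 1)) ω = bilatTerm q n (-ω) := by
  rw [bilatTerm_neg_natCast_sub_one hq, bilatTerm_natCast, mul_neg, Complex.exp_neg]
  have hz := Complex.exp_ne_zero (2 * π * I * ω)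
  have hQ := pow_ne_zero (8 * n + 4) hq
  generalize Complex.exp (2 * π * I * ω) = z at hz ⊢
  generalize q ^ (8 * n + 4) = Q at hQ ⊢
  by_cases hzQ : z ^ 2 = Q
  · -- both denominators vanish, and `x / 0 = 0` on both sides
    subst hzQ
    simp [hz]
  · have h₁ : 1 - z ^ 2 * Q⁻¹ ≠ 0 :=
      sub_ne_zero.2 (Ne.symm ((mul_inv_eq_one₀ hQ).not.2 hzQ))
    have h₂ : 1 - z⁻¹ ^ 2 * Q ≠ 0 := by
      rw [inv_pow]
      exact sub_ne_zero.2 (Ne.symm ((inv_mul_eq_one₀ (pow_ne_zero 2 hz)).not.2 hzQ))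
    field_simp
    ring

theorem hasSum_bilatTerm_nat {τ ω : ℂ} (hτ : 0 < τ.im) (hω : ‖ω‖ < τ.im) :
    HasSum (fun n : ℕ => bilatTerm (nome τ) n ω)
      (expSum (bilatCoeff (nome τ)) bilatFreq ω) := by
  have hS : Summable fun p => bilatCoeff (nome τ) p * Complex.exp (bilatFreq p * ω) :=
    (summable_bilatCoeff hτ).of_norm_bounded fun p => by
      rw [norm_mul]
      gcongr
      exact norm_exp_mul_le hω.le
  exact ((Equiv.prodComm ℕ ℕ).hasSum_iff.2 hS.hasSum).prod_fiberwise fun n =>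
    hasSum_bilatTerm n (norm_exp_mul_nome_pow_lt_one (by linarith) n)

theorem bilat_eq_expSum_add {τ ω : ℂ} (hτ : 0 < τ.im) (hω : ‖ω‖ < τ.im) :
    bilat τ ω = expSum (bilatCoeff (nome τ)) bilatFreq ω +
      expSum (bilatCoeff (nome τ)) bilatFreq (-ω) := by
  have hneg := hasSum_bilatTerm_nat hτ (ω := -ω) (by rwa [norm_neg])
  have hq : nome τ ≠ 0 := Complex.exp_ne_zero _
  simp only [← bilatTerm_neg_sub_one hq] at hneg
  rw [bilat_eq_tsum_bilatTerm]
  exact (HasSum.of_nat_of_neg_add_one (f := fun n => bilatTerm (nome τ) n ω)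
    (hasSum_bilatTerm_nat hτ hω) hneg).tsum_eq

theorem bilat_eventuallyEq {τ : ℂ} (hτ : 0 < τ.im) :
    bilat τ =ᶠ[𝓝 0] fun ω => expSum (bilatCoeff (nome τ)) bilatFreq ω +
      expSum (bilatCoeff (nome τ)) bilatFreq (-ω) :=
  eventually_of_mem (ball_mem_nhds 0 hτ) fun _ hω =>
    bilat_eq_expSum_add hτ (mem_ball_zero_iff.1 hω)

theorem analyticAt_bilat {τ : ℂ} (hτ : 0 < τ.im) : AnalyticAt ℂ (bilat τ) 0 := by
  have hE := analyticAt_expSum (summable_bilatCoeff hτ) (ω := 0) (by simpa using hτ)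
  exact (hE.add (hE.comp_of_eq analyticAt_id.neg neg_zero)).congr (bilat_eventuallyEq hτ).symm

theorem iteratedDeriv_bilat_zero {t : ℕ} (ht : Even t) {τ : ℂ} (hτ : 0 < τ.im) :
    iteratedDeriv t (bilat τ) 0 =
      2 * ∑' p, bilatCoeff (nome τ) p * bilatFreq p ^ t := by
  have hR := summable_bilatCoeff hτ
  have h0 : ‖(0 : ℂ)‖ < τ.im := by simpa using hτ
  rw [((bilat_eventuallyEq hτ).iteratedDeriv t).eq_of_nhds,
    iteratedDeriv_add_comp_neg_zero (analyticAt_expSum hR h0).contDiffAt,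
    iteratedDeriv_expSum hR t h0, ht.neg_one_pow, expSum]
  simp only [mul_zero, Complex.exp_zero, mul_one, smul_eq_mul]
  ring

theorem Fser_summand_eq (q : ℂ) (t β j : ℕ) :
    (-1 : ℂ) ^ (β + 1 + j + β) * (2 * (β : ℂ) + 1) ^ t *
        q ^ (4 * (β + 1 + j) ^ 2 - (2 * β + 1) ^ 2) =
      -((2 * π * I)⁻¹ ^ t * (bilatCoeff q (β, j) * bilatFreq (β, j) ^ t)) := by
  have hexp : 4 * (β + 1 + j) ^ 2 - (2 * β + 1) ^ 2 = (2 * j + 1) * (2 * j + 4 * β + 3) :=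
    Nat.sub_eq_of_eq_add (by ring)
  have hsign : (-1 : ℂ) ^ (β + 1 + j + β) = -(-1) ^ j := by
    rw [show β + 1 + j + β = 2 * β + j + 1 by ring, pow_succ, pow_add, pow_mul]
    simp
  have hfreq : (2 * π * I)⁻¹ ^ t * bilatFreq (β, j) ^ t = (2 * β + 1) ^ t := by
    rw [bilatFreq, ← mul_pow, ← mul_assoc, inv_mul_cancel₀ two_pi_I_ne_zero, one_mul]
  rw [hexp, hsign, bilatCoeff]
  linear_combination (-1 : ℂ) ^ j * q ^ ((2 * j + 1) * (2 * j + 4 * β + 3)) * hfreq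

theorem Fser_nome_eq {τ : ℂ} (hτ : 0 < τ.im) (t : ℕ) :
    Fser t (nome τ) =
      -((2 * π * I)⁻¹ ^ t * ∑' p, bilatCoeff (nome τ) p * bilatFreq p ^ t) := by
  have hsum : Summable fun p => bilatCoeff (nome τ) p * bilatFreq p ^ t :=
    .of_norm (by simpa using summable_norm_mul_pow_mul_exp (summable_bilatCoeff hτ) hτ t)
  rw [← tsum_mul_left, ← tsum_neg, (hsum.mul_left _).neg.tsum_prod, Fser]
  simp only [Fser_summand_eq]

/-- For even `t ≥ 0` and `τ ∈ ℍ`: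
`ℱ_t(q) = −½ D_ω^t [ Σ_{n∈ℤ} (−1)ⁿ e^{2πiω} q^{4n²+8n+3}/(1−e^{4πiω}q^{8n+4}) ]|_{ω=0}`,
the series being holomorphic in `ω` near `0`, where `D_ω = (2πi)⁻¹ d/dω`. -/
theorem stmt2 (t : ℕ) (ht : Even t) (τ : ℂ) (hτ : 0 < τ.im) :
    AnalyticAt ℂ (bilat τ) 0 ∧
    Fser t (nome τ) =
      -(1 / 2) * ((1 / (2 * (π : ℂ) * I)) ^ t * iteratedDeriv t (bilat τ) 0) := by
  refine ⟨analyticAt_bilat hτ, ?_⟩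
  rw [Fser_nome_eq hτ t, iteratedDeriv_bilat_zero ht hτ]
  ring
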